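/- arXiv:2412.21075 — 2 statements merged into one kernel-verified Lean document; each statement's English description precedes it below -/
import Mathlib

section
/- Let g, h ∈ 𝒢. The following are equivalent: (a) g(n) = O(h(n)), i.e. there is η > 0 such that g(n)/h(n) ≤ η for all n ∈ ℕ; (b) Exh(φ_g) ⊆ Exh(φ_h); (c) V[g(n)] ⊆ V[h(n)]. -/
open Filter Set
open scoped ENNReal

/-- A Waterman sequence: a nonincreasing sequence of positive reals whose series diverges. -/
def IsWaterman (a : ℕ → ℝ) : Prop :=
  Antitone a ∧ (∀ n, 0 < a n) ∧ ¬ Summable a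

/-- A Waterman sequence is proper if it moreover tends to zero. -/
def IsProperWaterman (a : ℕ → ℝ) : Prop :=
  IsWaterman a ∧ Tendsto a atTop (nhds 0)

/-- An admissible sequence of nonoverlapping closed subintervals `[s n, t n]` of `[0,1]`:
the intervals are contained in `[0,1]` and have pairwise disjoint interiors. -/
def Nonoverlapping (s t : ℕ → ℝ) : Prop :=
  (∀ n, 0 ≤ s n ∧ s n ≤ t n ∧ t n ≤ 1) ∧
  Pairwise fun m n => Disjoint (Set.Ioo (s m) (t m)) (Set.Ioo (s n) (t n))

/-- The `A`-variation (in the sense of Waterman) of `x` on `[0,1]`, with values in `[0,∞]`. -/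
noncomputable def eVar (a : ℕ → ℝ) (x : ℝ → ℝ) : ℝ≥0∞ :=
  ⨆ p : {p : (ℕ → ℝ) × (ℕ → ℝ) // Nonoverlapping p.1 p.2},
    ∑' n, ENNReal.ofReal (a n * |x (p.1.2 n) - x (p.1.1 n)|)

/-- Membership in the space `ABV` of functions of bounded `A`-variation. -/
def MemABV (a : ℕ → ℝ) (x : ℝ → ℝ) : Prop := eVar a x < ⊤

/-- The norm `‖x‖_{ABV} = |x(0)| + var_A(x)`, with values in `[0,∞]`. -/
noncomputable def eNormABV (a : ℕ → ℝ) (x : ℝ → ℝ) : ℝ≥0∞ :=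
  ENNReal.ofReal |x 0| + eVar a x

/-- The supremum norm of `x` on `[0,1]`, with values in `[0,∞]`. -/
noncomputable def eSupNorm (x : ℝ → ℝ) : ℝ≥0∞ :=
  ⨆ t ∈ Set.Icc (0 : ℝ) 1, ENNReal.ofReal |x t|

/-- `x` is bounded on `[0,1]`. -/
def BoundedOn01 (x : ℝ → ℝ) : Prop := ∃ C : ℝ, ∀ t ∈ Set.Icc (0 : ℝ) 1, |x t| ≤ C

/-- `K` is relatively compact with respect to the supremum norm on `[0,1]`: every sequence
in `K` has a subsequence converging in the supremum norm to some bounded function. -/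
def RelCompSup (K : Set (ℝ → ℝ)) : Prop :=
  ∀ u : ℕ → ℝ → ℝ, (∀ j, u j ∈ K) →
    ∃ φ : ℕ → ℕ, StrictMono φ ∧ ∃ x : ℝ → ℝ, BoundedOn01 x ∧
      Tendsto (fun k => eSupNorm (u (φ k) - x)) atTop (nhds 0)

/-- `K` is relatively compact in the norm of the space `BBV` (for the sequence `b`):
every sequence in `K` has a subsequence converging in `‖·‖_{BBV}` to an element of `BBV`. -/
def RelCompABV (b : ℕ → ℝ) (K : Set (ℝ → ℝ)) : Prop :=
  ∀ u : ℕ → ℝ → ℝ, (∀ j, u j ∈ K) →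
    ∃ φ : ℕ → ℕ, StrictMono φ ∧ ∃ x : ℝ → ℝ, MemABV b x ∧
      Tendsto (fun k => eNormABV b (u (φ k) - x)) atTop (nhds 0)

/-- `K` is a bounded subset of `ABV`. -/
def BddInABV (a : ℕ → ℝ) (K : Set (ℝ → ℝ)) : Prop :=
  ∃ M : ℝ≥0∞, M < ⊤ ∧ ∀ x ∈ K, eNormABV a x ≤ M

/-- `∑_{k=1}^n b_k = o(∑_{k=1}^n a_k)`. -/
def PartialSumsLittleO (a b : ℕ → ℝ) : Prop :=
  Tendsto (fun n => (∑ k ∈ Finset.range n, b k) / (∑ k ∈ Finset.range n, a k))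
    atTop (nhds 0)

/-- Condition (b): for every `ε > 0` there is `k₀` such that for every nonincreasing
nonnegative sequence `c` tending to `0` with `∑ aₙcₙ < ∞` one has
`∑_{n>k₀} bₙcₙ ≤ ε ∑ₙ aₙcₙ`. -/
def SmallTailCond (a b : ℕ → ℝ) : Prop :=
  ∀ ε : ℝ, 0 < ε → ∃ k₀ : ℕ, ∀ c : ℕ → ℝ,
    (∀ n, 0 ≤ c n) → Antitone c → Tendsto c atTop (nhds 0) →
    (∑' n, ENNReal.ofReal (a n * c n)) < ⊤ →
    (∑' n, ENNReal.ofReal (b (n + k₀) * c (n + k₀))) ≤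
      ENNReal.ofReal ε * ∑' n, ENNReal.ofReal (a n * c n)

/-- The compact-embedding property from `ABV` into `BBV`: every bounded subset of `ABV`
which is relatively compact in the supremum norm is contained in `BBV` and relatively
compact there. -/
def CompactEmbeddingABV (a b : ℕ → ℝ) : Prop :=
  ∀ K : Set (ℝ → ℝ), (∀ x ∈ K, MemABV a x) → BddInABV a K → RelCompSup K →
    (∀ x ∈ K, MemABV b x) ∧ RelCompABV b K

/-- The summable ideal `I_A = {C ⊆ ℕ : ∑_{n ∈ C} a_n < ∞}` (as a family of sets;
it may equal `P(ℕ)` when `∑ a_n < ∞`). -/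
def IdealOf (a : ℕ → ℝ) : Set (Set ℕ) := {C : Set ℕ | Summable fun n : C => a n}

/-- The Katětov order on families of subsets of `ℕ`. -/
def KatetovLE (I J : Set (Set ℕ)) : Prop :=
  ∃ f : ℕ → ℕ, ∀ C ∈ I, f ⁻¹' C ∈ J

/-- Given a sequence `b` and an increasing sequence `m` of naturals, the sequence `b^M`,
whose `n`-th term is `k·bₙ` where `k` is the number of indices `j` with `m j ≤ n`
(and `bₙ` itself if `n` is below all of `m`). -/
def seqM (b : ℕ → ℝ) (m : ℕ → ℕ) (n : ℕ) : ℝ :=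
  ((max 1 (((Finset.range (n + 1)).filter fun j => m j ≤ n).card) : ℕ) : ℝ) * b n

/-- An admissible `n`-tuple of nonoverlapping closed subintervals of `[0,1]`. -/
def NonoverlappingFin {n : ℕ} (s t : Fin n → ℝ) : Prop :=
  (∀ i, 0 ≤ s i ∧ s i ≤ t i ∧ t i ≤ 1) ∧
  Pairwise fun i j => Disjoint (Set.Ioo (s i) (t i)) (Set.Ioo (s j) (t j))

/-- The modulus of variation of Chanturia: `v(x,n)` is the supremum of `∑_{k=1}^n |x(I_k)|`
over all `n`-tuples of nonoverlapping closed subintervals of `[0,1]`. -/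
noncomputable def modVar (x : ℝ → ℝ) (n : ℕ) : ℝ≥0∞ :=
  ⨆ p : {p : (Fin n → ℝ) × (Fin n → ℝ) // NonoverlappingFin p.1 p.2},
    ENNReal.ofReal (∑ i, |x (p.1.2 i) - x (p.1.1 i)|)

/-- Membership in the Chanturia class `V[g(n)]`: `x` is bounded and `v(x,n) = O(g(n))`. -/
def MemChanturia (g : ℕ → ℝ) (x : ℝ → ℝ) : Prop :=
  BoundedOn01 x ∧ ∃ η : ℝ, 0 < η ∧ ∀ n, modVar x n ≤ ENNReal.ofReal (η * g n)

/-- The norm `‖x‖_{φ_g} = |x(0)| + sup_n v(x,n)/g(n)` of the Chanturia class. -/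
noncomputable def eNormChan (g : ℕ → ℝ) (x : ℝ → ℝ) : ℝ≥0∞ :=
  ENNReal.ofReal |x 0| + ⨆ n, modVar x n / ENNReal.ofReal (g n)

/-- The family `𝒢`: positive, nondecreasing `g` tending to `∞` with `n/g(n)`
nondecreasing and tending to `∞`. -/
def MemG (g : ℕ → ℝ) : Prop :=
  (∀ n, 0 < g n) ∧ Monotone g ∧ Tendsto g atTop atTop ∧
  Monotone (fun n : ℕ => (n : ℝ) / g n) ∧ Tendsto (fun n : ℕ => (n : ℝ) / g n) atTop atTop

/-- `K` is a bounded subset of the Chanturia class `V[g(n)]`. -/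
def BddInChan (g : ℕ → ℝ) (K : Set (ℝ → ℝ)) : Prop :=
  ∃ M : ℝ≥0∞, M < ⊤ ∧ ∀ x ∈ K, eNormChan g x ≤ M

/-- `K` is relatively compact in the norm of the Chanturia class `V[h(n)]`. -/
def RelCompChan (h : ℕ → ℝ) (K : Set (ℝ → ℝ)) : Prop :=
  ∀ u : ℕ → ℝ → ℝ, (∀ j, u j ∈ K) →
    ∃ φ : ℕ → ℕ, StrictMono φ ∧ ∃ x : ℝ → ℝ, MemChanturia h x ∧
      Tendsto (fun k => eNormChan h (u (φ k) - x)) atTop (nhds 0)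

/-- The compact-embedding property from `V[g(n)]` into `V[h(n)]`. -/
def CompactEmbeddingChan (g h : ℕ → ℝ) : Prop :=
  ∀ K : Set (ℝ → ℝ), (∀ x ∈ K, MemChanturia g x) → BddInChan g K → RelCompSup K →
    (∀ x ∈ K, MemChanturia h x) ∧ RelCompChan h K

/-- The submeasure `φ_g(C) = sup_n |C ∩ {0,…,n}| / g(n)`, with values in `[0,∞]`. -/
noncomputable def phiSub (g : ℕ → ℝ) (C : Set ℕ) : ℝ≥0∞ :=
  ⨆ n, ENNReal.ofReal (((C ∩ Set.Iic n).ncard : ℝ) / g n)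

/-- The exhaustive ideal `Exh(φ_g)`. -/
def Exh (g : ℕ → ℝ) : Set (Set ℕ) :=
  {C : Set ℕ | Tendsto (fun k => phiSub g (C \ Set.Iic k)) atTop (nhds 0)}

/-- The characteristic function of `[0,t]`. -/
noncomputable def chi (t : ℝ) : ℝ → ℝ := Set.indicator (Set.Icc 0 t) fun _ => 1

/-!
If `g / h ≤ η`, then `φ_h ≤ η φ_g` and `v(x, n) = O(g(n)) = O(h(n))`, which gives (a) ⇒ (b), (c).

If `g / h` is unbounded, choose `N k` increasing with `4ᵏ h(N k) ≤ g(N k)`.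
For (b), let `C` be the union of the blocks `(N k - ⌈h(N k)⌉, N k]`. Each block lies in the upper
half of `[0, N k]`, so its `φ_g`-mass is `O(4⁻ᵏ)`; as `φ_g` is countably subadditive, the tails of
`C` have small `φ_g`-mass. But every tail of `C` contains a whole block, of `φ_h`-mass `≥ 1`.
For (c), a function with spikes of nonincreasing heights `d j` at distinct points has
`∑_{j<n} d j ≤ v(x, n) ≤ 2 ∑_{j<n} d j`. The heights `d = ∑ₖ 2⁻ᵏ (g(N k) / N k) 𝟙[0, N k)`
have partial sums `≤ 2 g(n)`, since `g(n) / n` is nonincreasing, and `≥ 2⁻ᵏ g(N k) ≥ 2ᵏ h(N k)`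
at `N k`.
-/

section GrowthClass

variable {g h : ℕ → ℝ}

theorem MemG.mul_div_le (hg : MemG g) {m N : ℕ} (hmN : m ≤ N) (hN : 0 < N) :
    (m : ℝ) * (g N / N) ≤ g m := by
  rcases Nat.eq_zero_or_pos m with rfl | -
  · simpa using (hg.1 0).le
  have hmono : (m : ℝ) / g m ≤ N / g N := hg.2.2.2.1 hmN
  rw [div_le_div_iff₀ (hg.1 m) (hg.1 N)] at hmono
  rw [← mul_div_assoc, div_le_iff₀ (by exact_mod_cast hN)]
  linarith

theorem MemG.le_two_mul (hg : MemG g) {n N : ℕ} (hnN : n ≤ N) (hN : N ≤ 2 * n) :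
    g N ≤ 2 * g n := by
  rcases Nat.eq_zero_or_pos N with rfl | hNpos
  · obtain rfl : n = 0 := by omega
    linarith [hg.1 0]
  have hN' : (0 : ℝ) < N := by exact_mod_cast hNpos
  calc g N = N * (g N / N) := by field_simp
    _ ≤ (2 * n : ℕ) * (g N / N) := by gcongr; exact (div_pos (hg.1 N) hN').le
    _ = 2 * (n * (g N / N)) := by push_cast; ring
    _ ≤ 2 * g n := by gcongr; exact hg.mul_div_le hnN hNpos

theorem exists_strictMono_pow_mul_le (hg : MemG g) (hh : MemG h)
    (hgh : ¬ BddAbove (range fun n => g n / h n)) :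
    ∃ N : ℕ → ℕ, StrictMono N ∧
      ∀ k, 4 ^ k * h (N k) ≤ g (N k) ∧ 1 ≤ h (N k) ∧ 4 * g (N k) ≤ N k := by
  have hfreq : ∀ k : ℕ, ∃ᶠ n in atTop, (4 : ℝ) ^ k < g n / h n := by
    intro k hk
    refine hgh (IsBoundedUnder.bddAbove_range ⟨4 ^ k, ?_⟩)
    simpa using hk
  refine extraction_forall_of_frequently
    (P := fun k n => 4 ^ k * h n ≤ g n ∧ 1 ≤ h n ∧ 4 * g n ≤ n) fun k =>
    ((hfreq k).and_eventually ((hh.2.2.1.eventually_ge_atTop 1).and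
      (hg.2.2.2.2.eventually_ge_atTop 4))).mono ?_
  rintro n ⟨hlt, h1, h4⟩
  rw [lt_div_iff₀ (hh.1 n)] at hlt
  rw [le_div_iff₀ (hg.1 n)] at h4
  exact ⟨hlt.le, h1, h4⟩

end GrowthClass

section Submeasure

open MeasureTheory

variable {g h : ℕ → ℝ}

theorem phiSub_mono (hg : ∀ n, 0 ≤ g n) {A B : Set ℕ} (hAB : A ⊆ B) :
    phiSub g A ≤ phiSub g B :=
  iSup_mono fun n => ENNReal.ofReal_le_ofReal <| div_le_div_of_nonneg_right
    (Nat.cast_le.mpr <| ncard_le_ncard (inter_subset_inter_left _ hAB)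
      ((finite_Iic n).inter_of_right B)) (hg n)

theorem phiSub_le_mul_phiSub (hg : ∀ n, 0 < g n) (hh : ∀ n, 0 < h n) {η : ℝ}
    (hgh : ∀ n, g n / h n ≤ η) (C : Set ℕ) :
    phiSub h C ≤ ENNReal.ofReal η * phiSub g C := by
  have hη : 0 ≤ η := (div_pos (hg 0) (hh 0)).le.trans (hgh 0)
  refine iSup_le fun n => ?_
  have hcount : ((C ∩ Iic n).ncard : ℝ) / h n ≤ η * ((C ∩ Iic n).ncard / g n) :=
    calc ((C ∩ Iic n).ncard : ℝ) / h n = g n / h n * ((C ∩ Iic n).ncard / g n) := by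
          field_simp [(hg n).ne']
      _ ≤ η * ((C ∩ Iic n).ncard / g n) :=
          mul_le_mul_of_nonneg_right (hgh n) (div_nonneg (Nat.cast_nonneg _) (hg n).le)
  calc ENNReal.ofReal (((C ∩ Iic n).ncard : ℝ) / h n)
      ≤ ENNReal.ofReal η * ENNReal.ofReal ((C ∩ Iic n).ncard / g n) := by
        rw [← ENNReal.ofReal_mul hη]
        exact ENNReal.ofReal_le_ofReal hcount
    _ ≤ ENNReal.ofReal η * phiSub g C := by
        gcongr
        exact le_iSup (fun m => ENNReal.ofReal (((C ∩ Iic m).ncard : ℝ) / g m)) n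

theorem phiSub_eq_iSup_count (hg : ∀ n, 0 < g n) (C : Set ℕ) :
    phiSub g C = ⨆ n, Measure.count (C ∩ Iic n) / ENNReal.ofReal (g n) := by
  refine iSup_congr fun n => ?_
  have hfin : (C ∩ Iic n).Finite := (finite_Iic n).inter_of_right C
  rw [ENNReal.ofReal_div_of_pos (hg n), Measure.count_apply_finite _ hfin,
    ncard_eq_toFinset_card _ hfin, ENNReal.ofReal_natCast]

theorem phiSub_iUnion_le (hg : ∀ n, 0 < g n) (B : ℕ → Set ℕ) :
    phiSub g (⋃ k, B k) ≤ ∑' k, phiSub g (B k) := by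
  simp_rw [phiSub_eq_iSup_count hg]
  refine iSup_le fun n => ?_
  calc Measure.count ((⋃ k, B k) ∩ Iic n) / ENNReal.ofReal (g n)
      ≤ (∑' k, Measure.count (B k ∩ Iic n)) / ENNReal.ofReal (g n) := by
        gcongr
        rw [iUnion_inter]
        exact measure_iUnion_le _
    _ = ∑' k, Measure.count (B k ∩ Iic n) / ENNReal.ofReal (g n) := by
        simp only [div_eq_mul_inv, ENNReal.tsum_mul_right]
    _ ≤ ∑' k, ⨆ m, Measure.count (B k ∩ Iic m) / ENNReal.ofReal (g m) :=
        ENNReal.tsum_le_tsum fun k =>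
          le_iSup (fun m => Measure.count (B k ∩ Iic m) / ENNReal.ofReal (g m)) n

theorem Exh_subset_Exh (hg : ∀ n, 0 < g n) (hh : ∀ n, 0 < h n) {η : ℝ}
    (hgh : ∀ n, g n / h n ≤ η) : Exh g ⊆ Exh h := fun C hC =>
  tendsto_of_tendsto_of_tendsto_of_le_of_le tendsto_const_nhds
    (by simpa using ENNReal.Tendsto.const_mul hC (.inr ENNReal.ofReal_ne_top))
    (fun _ => bot_le) (fun k => phiSub_le_mul_phiSub hg hh hgh _)

theorem phiSub_Ioc_le (hg : MemG g) {N c : ℕ} (hc : 2 * c ≤ N) :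
    phiSub g (Ioc (N - c) N) ≤ ENNReal.ofReal (2 * c / g N) := by
  refine iSup_le fun n => ENNReal.ofReal_le_ofReal ?_
  have hcard : ((Ioc (N - c) N ∩ Iic n).ncard : ℝ) ≤ c := by
    have := ncard_le_ncard (inter_subset_left (s := Ioc (N - c) N) (t := Iic n)) (finite_Ioc _ _)
    rw [ncard_Ioc_nat] at this
    exact_mod_cast this.trans (by omega)
  have hc0 : (0 : ℝ) ≤ c := Nat.cast_nonneg c
  rcases le_total N n with hNn | hnN
  · calc ((Ioc (N - c) N ∩ Iic n).ncard : ℝ) / g n ≤ c / g N :=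
          div_le_div₀ hc0 hcard (hg.1 N) (hg.2.1 hNn)
      _ ≤ 2 * c / g N := div_le_div_of_nonneg_right (by linarith) (hg.1 N).le
  rcases le_or_gt n (N - c) with hn | hn
  · have hempty : Ioc (N - c) N ∩ Iic n = ∅ := by
      ext i
      simp only [mem_inter_iff, mem_Ioc, mem_Iic, mem_empty_iff_false, iff_false]
      omega
    rw [hempty, ncard_empty, Nat.cast_zero, zero_div]
    exact div_nonneg (by positivity) (hg.1 N).le
  · have hgN := hg.le_two_mul hnN (by omega)
    calc ((Ioc (N - c) N ∩ Iic n).ncard : ℝ) / g n ≤ c / g n :=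
          div_le_div_of_nonneg_right hcard (hg.1 n).le
      _ ≤ 2 * c / g N := by
        rw [div_le_div_iff₀ (hg.1 n) (hg.1 N)]
        nlinarith

theorem ofReal_div_le_phiSub_Ioc {N c : ℕ} (hc : c ≤ N) :
    ENNReal.ofReal (c / g N) ≤ phiSub g (Ioc (N - c) N) := by
  refine le_of_eq_of_le ?_ (le_iSup _ N)
  rw [inter_eq_left.mpr Ioc_subset_Iic_self, ncard_Ioc_nat, Nat.sub_sub_self hc]

theorem iUnion_mem_Exh (hg : ∀ n, 0 < g n) {B : ℕ → Set ℕ} {N : ℕ → ℕ} (hN : Monotone N)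
    (hB : ∀ k, B k ⊆ Iic (N k)) (hsum : ∑' k, phiSub g (B k) ≠ ⊤) : ⋃ k, B k ∈ Exh g := by
  refine ENNReal.tendsto_atTop_zero.mpr fun ε hε => ?_
  obtain ⟨K, hK⟩ := ((ENNReal.tendsto_sum_nat_add _ hsum).eventually (ge_mem_nhds hε)).exists
  refine ⟨N K, fun m hm => ?_⟩
  have hsub : (⋃ k, B k) \ Iic m ⊆ ⋃ k, B (k + K) := by
    rintro i ⟨hi, him⟩
    obtain ⟨j, hij⟩ := mem_iUnion.mp hi
    have hKj : K ≤ j := by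
      by_contra hjK
      exact him (mem_Iic.mpr ((mem_Iic.mp (hB j hij)).trans ((hN (by omega)).trans hm)))
    exact mem_iUnion.mpr ⟨j - K, by rwa [Nat.sub_add_cancel hKj]⟩
  exact (phiSub_mono (fun n => (hg n).le) hsub).trans ((phiSub_iUnion_le hg _).trans hK)

theorem iUnion_notMem_Exh (hh : ∀ n, 0 ≤ h n) {B : ℕ → Set ℕ}
    (hB : ∀ m, ∃ k, Disjoint (B k) (Iic m) ∧ 1 ≤ phiSub h (B k)) : ⋃ k, B k ∉ Exh h := by
  intro hmem
  obtain ⟨m, hm⟩ := (hmem.eventually (gt_mem_nhds zero_lt_one)).exists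
  obtain ⟨k, hdisj, hk⟩ := hB m
  exact hm.not_ge (hk.trans (phiSub_mono hh (subset_sdiff.mpr ⟨subset_iUnion B k, hdisj⟩)))

theorem exists_mem_Exh_notMem_Exh (hg : MemG g) (hh : MemG h)
    (hgh : ¬ BddAbove (range fun n => g n / h n)) : ∃ C ∈ Exh g, C ∉ Exh h := by
  obtain ⟨N, hNmono, hN⟩ := exists_strictMono_pow_mul_le hg hh hgh
  obtain ⟨c, hhc, hc2h⟩ : ∃ c : ℕ → ℕ, (∀ k, h (N k) ≤ c k) ∧ ∀ k, (c k : ℝ) ≤ 2 * h (N k) :=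
    ⟨fun k => ⌈h (N k)⌉₊, fun k => Nat.le_ceil _, fun k =>
      (Nat.ceil_lt_add_one (hh.1 _).le).le.trans (by linarith [(hN k).2.1])⟩
  have hcN : ∀ k, 2 * c k ≤ N k := fun k => by
    have hhg : h (N k) ≤ 4 ^ k * h (N k) :=
      le_mul_of_one_le_left (hh.1 _).le (one_le_pow₀ (by norm_num))
    have : (2 * c k : ℝ) ≤ N k := by linarith [hc2h k, (hN k).1, (hN k).2.2]
    exact_mod_cast this
  have hmass : ∀ k, phiSub g (Ioc (N k - c k) (N k)) ≤ ENNReal.ofReal (4 * (1 / 4) ^ k) := by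
    intro k
    refine (phiSub_Ioc_le hg (hcN k)).trans (ENNReal.ofReal_le_ofReal ?_)
    have hpow : (1 / 4 : ℝ) ^ k * 4 ^ k = 1 := by rw [← mul_pow]; norm_num
    rw [div_le_iff₀ (hg.1 _)]
    calc 2 * (c k : ℝ) ≤ 4 * ((1 / 4) ^ k * 4 ^ k) * h (N k) := by
          rw [hpow]; linarith [hc2h k]
      _ ≤ 4 * (1 / 4) ^ k * g (N k) := by
          rw [mul_assoc 4, mul_assoc, mul_assoc]; gcongr; linarith [(hN k).1]
  refine ⟨⋃ k, Ioc (N k - c k) (N k),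
    iUnion_mem_Exh hg.1 hNmono.monotone (fun k => Ioc_subset_Iic_self) ?_,
    iUnion_notMem_Exh (fun n => (hh.1 n).le) fun m => ⟨2 * m + 2, ?_, ?_⟩⟩
  · have hgeom : Summable fun k : ℕ => 4 * (1 / 4 : ℝ) ^ k :=
      (summable_geometric_of_lt_one (by norm_num) (by norm_num)).mul_left 4
    refine ne_top_of_le_ne_top ?_ (ENNReal.tsum_le_tsum hmass)
    rw [← ENNReal.ofReal_tsum_of_nonneg (fun k => by positivity) hgeom]
    exact ENNReal.ofReal_ne_top
  · rw [disjoint_left]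
    intro i hi him
    have hm : 2 * m + 2 ≤ N (2 * m + 2) := hNmono.id_le _
    have := hcN (2 * m + 2)
    simp only [mem_Ioc, mem_Iic] at hi him
    omega
  · refine le_trans ?_ (ofReal_div_le_phiSub_Ioc (by linarith [hcN (2 * m + 2)]))
    rw [← ENNReal.ofReal_one]
    exact ENNReal.ofReal_le_ofReal ((one_le_div (hh.1 _)).mpr (hhc _))

end Submeasure

section ModulusOfVariation

theorem NonoverlappingFin.injOn_fst {n : ℕ} {s t : Fin n → ℝ} (hst : NonoverlappingFin s t) :
    InjOn s {i | s i < t i} := by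
  intro i (hi : s i < t i) j (hj : s j < t j) hij
  by_contra hne
  have hdisj : Disjoint (Ioo (s i) (t i)) (Ioo (s j) (t j)) := hst.2 hne
  rw [Ioo_disjoint_Ioo, hij, max_self, min_le_iff] at hdisj
  rcases hdisj with h | h <;> linarith

theorem NonoverlappingFin.injOn_snd {n : ℕ} {s t : Fin n → ℝ} (hst : NonoverlappingFin s t) :
    InjOn t {i | s i < t i} := by
  intro i (hi : s i < t i) j (hj : s j < t j) hij
  by_contra hne
  have hdisj : Disjoint (Ioo (s i) (t i)) (Ioo (s j) (t j)) := hst.2 hne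
  rw [Ioo_disjoint_Ioo, hij, min_self, le_max_iff] at hdisj
  rcases hdisj with h | h <;> linarith

theorem modVar_le_ofReal {x : ℝ → ℝ} {n : ℕ} {B : ℝ}
    (hx : ∀ s t : Fin n → ℝ, NonoverlappingFin s t → ∑ i, |x (t i) - x (s i)| ≤ B) :
    modVar x n ≤ ENNReal.ofReal B :=
  iSup_le fun p => ENNReal.ofReal_le_ofReal (hx _ _ p.2)

theorem ofReal_le_modVar {x : ℝ → ℝ} {n : ℕ} {s t : Fin n → ℝ} (hst : NonoverlappingFin s t) :
    ENNReal.ofReal (∑ i, |x (t i) - x (s i)|) ≤ modVar x n :=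
  le_iSup (fun p : {p : (Fin n → ℝ) × (Fin n → ℝ) // NonoverlappingFin p.1 p.2} =>
    ENNReal.ofReal (∑ i, |x (p.1.2 i) - x (p.1.1 i)|)) ⟨(s, t), hst⟩

end ModulusOfVariation

theorem Antitone.sum_le_sum_range_card {d : ℕ → ℝ} (hd : Antitone d) (T : Finset ℕ) :
    ∑ j ∈ T, d j ≤ ∑ j ∈ Finset.range T.card, d j := by
  classical
  induction T using Finset.induction_on_max with
  | empty => simp
  | insert a s has ih =>
    have ha : a ∉ s := fun ha => lt_irrefl a (has a ha)
    have hcard : s.card ≤ a := by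
      simpa using Finset.card_le_card fun x hx => Finset.mem_range.mpr (has x hx)
    rw [Finset.sum_insert ha, Finset.card_insert_of_notMem ha, Finset.sum_range_succ, add_comm]
    exact add_le_add ih (hd hcard)

section Spikes

noncomputable def spikePt (m : ℕ) : ℝ := 1 / (m + 2)

theorem spikePt_strictAnti : StrictAnti spikePt := fun i j hij => by
  unfold spikePt
  gcongr

theorem spikePt_mem_Icc (m : ℕ) : spikePt m ∈ Icc 0 1 := by
  unfold spikePt
  refine ⟨by positivity, (div_le_one (by positivity)).mpr ?_⟩
  linarith [(Nat.cast_nonneg m : (0 : ℝ) ≤ m)]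

noncomputable def spikeFun (d : ℕ → ℝ) : ℝ → ℝ :=
  Function.extend (fun j => spikePt (2 * j)) d 0

variable {d : ℕ → ℝ}

theorem spikePt_two_mul_injective : Function.Injective fun j => spikePt (2 * j) :=
  spikePt_strictAnti.injective.comp fun i j hij => by omega

theorem spikeFun_spikePt_two_mul (j : ℕ) : spikeFun d (spikePt (2 * j)) = d j :=
  spikePt_two_mul_injective.extend_apply d 0 j

theorem spikeFun_spikePt_two_mul_add_one (j : ℕ) : spikeFun d (spikePt (2 * j + 1)) = 0 :=
  Function.extend_apply' _ _ _ fun ⟨i, hi⟩ => by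
    have := spikePt_strictAnti.injective hi
    omega

theorem spikeFun_eq_zero_or (u : ℝ) : spikeFun d u = 0 ∨ ∃ j, spikeFun d u = d j := by
  by_cases hu : ∃ j, spikePt (2 * j) = u
  · obtain ⟨j, rfl⟩ := hu
    exact .inr ⟨j, spikeFun_spikePt_two_mul j⟩
  · exact .inl (Function.extend_apply' _ _ _ hu)

theorem spikeFun_nonneg (hd : ∀ j, 0 ≤ d j) (u : ℝ) : 0 ≤ spikeFun d u := by
  rcases spikeFun_eq_zero_or u with h0 | ⟨j, hj⟩
  · rw [h0]
  · rw [hj]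
    exact hd j

theorem spikeFun_le (hd : ∀ j, 0 ≤ d j) (hanti : Antitone d) (u : ℝ) : spikeFun d u ≤ d 0 := by
  rcases spikeFun_eq_zero_or u with h0 | ⟨j, hj⟩
  · rw [h0]
    exact hd 0
  · rw [hj]
    exact hanti (Nat.zero_le j)

theorem sum_spikeFun_le (hd : ∀ j, 0 ≤ d j) (hanti : Antitone d) {S : Finset ℝ} {n : ℕ}
    (hS : S.card ≤ n) : ∑ u ∈ S, spikeFun d u ≤ ∑ j ∈ Finset.range n, d j := by
  have hinj : InjOn (fun j : ℕ => spikePt (2 * j)) ((fun j => spikePt (2 * j)) ⁻¹' S) :=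
    spikePt_two_mul_injective.injOn
  set T := S.preimage _ hinj
  have hT : T.card ≤ n :=
    (Finset.card_le_card_of_injOn _ (fun j hj => Finset.mem_preimage.mp hj)
      (spikePt_two_mul_injective.injOn)).trans hS
  calc ∑ u ∈ S, spikeFun d u = ∑ j ∈ T, d j := by
        rw [← Finset.sum_preimage _ S hinj (spikeFun d) fun u _ hu =>
          Function.extend_apply' _ _ _ hu]
        simp only [spikeFun_spikePt_two_mul, T]
    _ ≤ ∑ j ∈ Finset.range T.card, d j := hanti.sum_le_sum_range_card T
    _ ≤ ∑ j ∈ Finset.range n, d j :=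
        Finset.sum_le_sum_of_subset_of_nonneg (Finset.range_subset_range.mpr hT)
          fun j _ _ => hd j

theorem modVar_spikeFun_le (hd : ∀ j, 0 ≤ d j) (hanti : Antitone d) (n : ℕ) :
    modVar (spikeFun d) n ≤ ENNReal.ofReal (2 * ∑ j ∈ Finset.range n, d j) := by
  classical
  refine modVar_le_ofReal fun s t hst => ?_
  set x := spikeFun d
  set A := Finset.univ.filter fun i => s i < t i
  have hA : ∀ {S : Finset ℝ}, S.card ≤ A.card → ∑ u ∈ S, x u ≤ ∑ j ∈ Finset.range n, d j :=
    fun hS => sum_spikeFun_le hd hanti (hS.trans ((Finset.card_filter_le _ _).trans (by simp)))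
  have hAset : (A : Set (Fin n)) = {i | s i < t i} := by simp [A]
  calc ∑ i, |x (t i) - x (s i)| = ∑ i ∈ A, |x (t i) - x (s i)| := by
        refine (Finset.sum_filter_of_ne fun i _ hne =>
          (hst.1 i).2.1.lt_of_ne fun heq => hne ?_).symm
        rw [heq, sub_self, abs_zero]
    _ ≤ ∑ i ∈ A, (x (s i) + x (t i)) := Finset.sum_le_sum fun i _ =>
        abs_sub_le_iff.mpr ⟨by linarith [spikeFun_nonneg hd (s i)],
          by linarith [spikeFun_nonneg hd (t i)]⟩
    _ = ∑ u ∈ A.image s, x u + ∑ u ∈ A.image t, x u := by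
        rw [Finset.sum_add_distrib, Finset.sum_image (hAset ▸ hst.injOn_fst),
          Finset.sum_image (hAset ▸ hst.injOn_snd)]
    _ ≤ ∑ j ∈ Finset.range n, d j + ∑ j ∈ Finset.range n, d j :=
        add_le_add (hA Finset.card_image_le) (hA Finset.card_image_le)
    _ = 2 * ∑ j ∈ Finset.range n, d j := by ring

theorem ofReal_sum_range_le_modVar_spikeFun (hd : ∀ j, 0 ≤ d j) (n : ℕ) :
    ENNReal.ofReal (∑ j ∈ Finset.range n, d j) ≤ modVar (spikeFun d) n := by
  have hst : NonoverlappingFin (fun i : Fin n => spikePt (2 * i + 1))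
      (fun i => spikePt (2 * i)) := by
    refine ⟨fun i => ⟨(spikePt_mem_Icc _).1, (spikePt_strictAnti (by omega)).le,
      (spikePt_mem_Icc _).2⟩, fun i j hij => ?_⟩
    refine Ioo_disjoint_Ioo.mpr ?_
    rcases lt_or_gt_of_ne (Fin.val_ne_of_ne hij) with h | h
    · exact (min_le_right _ _).trans
        ((spikePt_strictAnti.antitone (by omega)).trans (le_max_left _ _))
    · exact (min_le_left _ _).trans
        ((spikePt_strictAnti.antitone (by omega)).trans (le_max_right _ _))
  refine le_of_eq_of_le ?_ (ofReal_le_modVar hst)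
  simp only [spikeFun_spikePt_two_mul, spikeFun_spikePt_two_mul_add_one, sub_zero,
    abs_of_nonneg (hd _)]
  rw [Fin.sum_univ_eq_sum_range d]

end Spikes

section StepSum

noncomputable def stepSum (w : ℕ → ℝ) (N : ℕ → ℕ) (j : ℕ) : ℝ :=
  ∑' k, if j < N k then w k else 0

variable {w : ℕ → ℝ} {N : ℕ → ℕ}

theorem summable_ite_lt (hw0 : ∀ k, 0 ≤ w k) (hw : Summable w) (j : ℕ) :
    Summable fun k => if j < N k then w k else 0 :=
  hw.of_nonneg_of_le (fun k => by split_ifs <;> simp [hw0 k])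
    (fun k => by split_ifs <;> simp [hw0 k])

theorem stepSum_nonneg (hw0 : ∀ k, 0 ≤ w k) (j : ℕ) : 0 ≤ stepSum w N j :=
  tsum_nonneg fun k => by split_ifs <;> simp [hw0 k]

theorem stepSum_antitone (hw0 : ∀ k, 0 ≤ w k) (hw : Summable w) : Antitone (stepSum w N) :=
  fun i j hij => (summable_ite_lt hw0 hw j).tsum_le_tsum
    (fun k => by split_ifs <;> first | exact le_rfl | exact hw0 k | omega)
    (summable_ite_lt hw0 hw i)

theorem sum_range_stepSum (hw0 : ∀ k, 0 ≤ w k) (hw : Summable w) (n : ℕ) :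
    ∑ j ∈ Finset.range n, stepSum w N j = ∑' k, (min n (N k) : ℕ) * w k := by
  unfold stepSum
  rw [← Summable.tsum_finsetSum fun j _ => summable_ite_lt hw0 hw j]
  congr 1
  ext k
  have hfilter : (Finset.range n).filter (· < N k) = Finset.range (min n (N k)) := by
    ext j
    simp only [Finset.mem_filter, Finset.mem_range]
    omega
  rw [Finset.sum_ite, Finset.sum_const_zero, add_zero, Finset.sum_const, hfilter,
    Finset.card_range, nsmul_eq_mul]

end StepSum

section Chanturia

variable {g h : ℕ → ℝ}

theorem MemG.exists_antitone_sum_range_le (hg : MemG g) {N : ℕ → ℕ} (hN : ∀ k, g (N k) ≤ N k) :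
    ∃ d : ℕ → ℝ, (∀ j, 0 ≤ d j) ∧ Antitone d ∧
      (∀ n, ∑ j ∈ Finset.range n, d j ≤ 2 * g n) ∧
      ∀ k, (1 / 2) ^ k * g (N k) ≤ ∑ j ∈ Finset.range (N k), d j := by
  have hNpos : ∀ k, (0 : ℝ) < N k := fun k => (hg.1 _).trans_le (hN k)
  set w : ℕ → ℝ := fun k => (1 / 2) ^ k * (g (N k) / N k)
  have hw0 : ∀ k, 0 ≤ w k := fun k => mul_nonneg (by positivity) (div_pos (hg.1 _) (hNpos k)).le
  have hw : Summable w := summable_geometric_two.of_nonneg_of_le hw0 fun k =>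
    mul_le_of_le_one_right (by positivity) ((div_le_one (hNpos k)).mpr (hN k))
  have hterm : ∀ n k, ((min n (N k) : ℕ) : ℝ) * w k ≤ (1 / 2) ^ k * g n := fun n k =>
    calc ((min n (N k) : ℕ) : ℝ) * w k = (1 / 2) ^ k * ((min n (N k) : ℕ) * (g (N k) / N k)) := by
          ring
      _ ≤ (1 / 2) ^ k * g (min n (N k)) := by
          gcongr
          exact hg.mul_div_le (min_le_right _ _) (by exact_mod_cast hNpos k)
      _ ≤ (1 / 2) ^ k * g n := by
          gcongr
          exact hg.2.1 (min_le_left _ _)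
  have hsummable : ∀ n, Summable fun k => ((min n (N k) : ℕ) : ℝ) * w k := fun n =>
    (summable_geometric_two.mul_right (g n)).of_nonneg_of_le
      (fun k => mul_nonneg (Nat.cast_nonneg _) (hw0 k)) (hterm n)
  refine ⟨stepSum w N, stepSum_nonneg hw0, stepSum_antitone hw0 hw, fun n => ?_, fun k => ?_⟩
  · rw [sum_range_stepSum hw0 hw, ← tsum_geometric_two, ← tsum_mul_right]
    exact (hsummable n).tsum_le_tsum (hterm n) (summable_geometric_two.mul_right (g n))
  · rw [sum_range_stepSum hw0 hw]
    refine le_of_eq_of_le ?_ ((hsummable (N k)).le_tsum k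
      fun k' _ => mul_nonneg (Nat.cast_nonneg _) (hw0 k'))
    rw [min_self, mul_left_comm, mul_div_cancel₀ _ (hNpos k).ne']

theorem MemChanturia.mono (hh : ∀ n, 0 < h n) {η : ℝ} (hη : 0 < η) (hgh : ∀ n, g n / h n ≤ η)
    {x : ℝ → ℝ} (hx : MemChanturia g x) : MemChanturia h x := by
  obtain ⟨hbdd, η₀, hη₀, hv⟩ := hx
  refine ⟨hbdd, η₀ * η, by positivity, fun n => (hv n).trans (ENNReal.ofReal_le_ofReal ?_)⟩
  rw [mul_assoc]
  gcongr
  exact (div_le_iff₀ (hh n)).mp (hgh n)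

theorem exists_memChanturia_notMemChanturia (hg : MemG g) (hh : MemG h)
    (hgh : ¬ BddAbove (range fun n => g n / h n)) :
    ∃ x, MemChanturia g x ∧ ¬ MemChanturia h x := by
  obtain ⟨N, -, hN⟩ := exists_strictMono_pow_mul_le hg hh hgh
  obtain ⟨d, hd0, hanti, hupper, hlower⟩ := hg.exists_antitone_sum_range_le (N := N) fun k => by
    linarith [(hN k).2.2, hg.1 (N k)]
  refine ⟨spikeFun d, ⟨⟨d 0, fun u _ => ?_⟩, 4, by norm_num, fun n => ?_⟩, ?_⟩
  · rw [abs_of_nonneg (spikeFun_nonneg hd0 u)]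
    exact spikeFun_le hd0 hanti u
  · exact (modVar_spikeFun_le hd0 hanti n).trans
      (ENNReal.ofReal_le_ofReal (by linarith [hupper n]))
  · rintro ⟨-, η, hη, hv⟩
    obtain ⟨k, hk⟩ := pow_unbounded_of_one_lt η (one_lt_two (α := ℝ))
    have hvar := (ENNReal.ofReal_le_ofReal (hlower k)).trans
      ((ofReal_sum_range_le_modVar_spikeFun hd0 (N k)).trans (hv (N k)))
    rw [ENNReal.ofReal_le_ofReal_iff (by positivity [hh.1 (N k)])] at hvar
    have hpow : (1 / 2 : ℝ) ^ k * 4 ^ k = 2 ^ k := by rw [← mul_pow]; norm_num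
    have : 2 ^ k * h (N k) ≤ η * h (N k) :=
      calc 2 ^ k * h (N k) = (1 / 2) ^ k * (4 ^ k * h (N k)) := by rw [← mul_assoc, hpow]
        _ ≤ (1 / 2) ^ k * g (N k) := by gcongr; exact (hN k).1
        _ ≤ η * h (N k) := hvar
    exact hk.not_ge (le_of_mul_le_mul_right this (hh.1 _))

end Chanturia

/-- For `g, h ∈ 𝒢`, the following are equivalent: (a) `g(n) = O(h(n))`;
(b) `Exh(φ_g) ⊆ Exh(φ_h)`; (c) `V[g(n)] ⊆ V[h(n)]`. -/
theorem stmt10 (g h : ℕ → ℝ) (hg : MemG g) (hh : MemG h) :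
    ((∃ η : ℝ, 0 < η ∧ ∀ n, g n / h n ≤ η) ↔ Exh g ⊆ Exh h) ∧
    (Exh g ⊆ Exh h ↔ ∀ x : ℝ → ℝ, MemChanturia g x → MemChanturia h x) := by
  by_cases ha : ∃ η : ℝ, 0 < η ∧ ∀ n, g n / h n ≤ η
  · obtain ⟨η, hη, hgh⟩ := ha
    have hb : Exh g ⊆ Exh h := Exh_subset_Exh hg.1 hh.1 hgh
    exact ⟨iff_of_true ⟨η, hη, hgh⟩ hb,
      iff_of_true hb fun x => MemChanturia.mono hh.1 hη hgh⟩
  · have hunbdd : ¬ BddAbove (range fun n => g n / h n) := fun ⟨M, hM⟩ =>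
      ha ⟨max M 1, by positivity, fun n => (hM ⟨n, rfl⟩).trans (le_max_left _ _)⟩
    obtain ⟨C, hCg, hCh⟩ := exists_mem_Exh_notMem_Exh hg hh hunbdd
    obtain ⟨x, hxg, hxh⟩ := exists_memChanturia_notMemChanturia hg hh hunbdd
    exact ⟨iff_of_false ha fun hb => hCh (hb hCg),
      iff_of_false (fun hb => hCh (hb hCg)) fun hc => hxh (hc x hxg)⟩
end

section
/- Let (x_j) be a sequence of bounded functions x_j : [0,1] → ℝ such that for every t ∈ [0,1] the set {x_j(t) : j ∈ ℕ} is bounded, and such that the sequence μ(n) = limsup_{j→∞} v(x_j, n) is finite for each n and satisfies μ(n) = o(n), i.e. lim_{n→∞} μ(n)/n = 0. Then there exists a subsequence (x_{j_k}) of (x_j) pointwise convergent on [0,1] to some function x : [0,1] → ℝ satisfying v(x,n) ≤ μ(n) for all n ∈ ℕ. -/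
/-! Pass to a subsequence along which the oscillations of `x_j` on every rational interval
`(p, q)` converge, to `ω(p, q)` say. If `N` points of `[0,1]` had all their rational
neighbourhoods of limiting oscillation `≥ c`, disjoint neighbourhoods of them would give
`v(x_j, N) ≥ N c / 2` for large `j`, against `μ(N) = o(N)`. Hence the points at which `ω`
does not become small are countable, and a second extraction makes the subsequence converge
there and at the rationals. At any other point `t` some rational interval around `t` has small
limiting oscillation, so `x_j(t)` stays close to the Cauchy sequence `x_j(r)` for a rational `r`
in it. Finally each sum defining `v(·, n)` passes to the pointwise limit, so
`v(x, n) ≤ limsup_j v(x_j, n) = μ(n)`. -/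

open Filter Set
open scoped ENNReal

open Function Topology

theorem exists_subseq_forall_tendsto {ι : Type*} [Countable ι] {X : ι → Type*}
    [∀ i, TopologicalSpace (X i)] [∀ i, FirstCountableTopology (X i)] {K : ∀ i, Set (X i)}
    (hK : ∀ i, IsCompact (K i)) (f : ℕ → ∀ i, X i) (hf : ∀ j i, f j i ∈ K i) :
    ∃ φ : ℕ → ℕ, StrictMono φ ∧ ∃ L : ∀ i, X i,
      ∀ i, Tendsto (fun k => f (φ k) i) atTop (𝓝 (L i)) := by
  obtain ⟨L, -, φ, hφ, hL⟩ := (isCompact_univ_pi hK).tendsto_subseq fun j => mem_univ_pi.2 (hf j)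
  exact ⟨φ, hφ, L, tendsto_pi_nhds.1 hL⟩

theorem exists_rat_lt_lt_Ioo_subset {t : ℝ} {U : Set ℝ} (hU : U ∈ 𝓝 t) :
    ∃ p q : ℚ, (p : ℝ) < t ∧ t < q ∧ Ioo (p : ℝ) q ⊆ U := by
  obtain ⟨a, b, ⟨hat, htb⟩, hab⟩ := mem_nhds_iff_exists_Ioo_subset.1 hU
  obtain ⟨p, hap, hpt⟩ := exists_rat_btwn hat
  obtain ⟨q, htq, hqb⟩ := exists_rat_btwn htb
  exact ⟨p, q, hpt, htq, (Ioo_subset_Ioo hap.le hqb.le).trans hab⟩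

theorem ofReal_sum_le_modVar (f : ℝ → ℝ) {n : ℕ} {s t : Fin n → ℝ}
    (h : NonoverlappingFin s t) : ENNReal.ofReal (∑ i, |f (t i) - f (s i)|) ≤ modVar f n :=
  le_iSup (fun p : {p : (Fin n → ℝ) × (Fin n → ℝ) // NonoverlappingFin p.1 p.2} =>
    ENNReal.ofReal (∑ i, |f (p.1.2 i) - f (p.1.1 i)|)) ⟨(s, t), h⟩

theorem modVar_le_limsup_of_tendsto {ι : Type*} {l : Filter ι} [l.NeBot] {w : ι → ℝ → ℝ}
    {y : ℝ → ℝ} (hw : ∀ t ∈ Icc (0 : ℝ) 1, Tendsto (fun k => w k t) l (𝓝 (y t))) (n : ℕ) :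
    modVar y n ≤ limsup (fun k => modVar (w k) n) l := by
  refine iSup_le fun ⟨(s, t), hst⟩ => ?_
  have hmem : ∀ i, s i ∈ Icc (0 : ℝ) 1 ∧ t i ∈ Icc (0 : ℝ) 1 := fun i =>
    have ⟨h0s, hst, ht1⟩ := hst.1 i
    ⟨⟨h0s, hst.trans ht1⟩, ⟨h0s.trans hst, ht1⟩⟩
  have hlim : Tendsto (fun k => ENNReal.ofReal (∑ i, |w k (t i) - w k (s i)|)) l
      (𝓝 (ENNReal.ofReal (∑ i, |y (t i) - y (s i)|))) :=
    ENNReal.tendsto_ofReal <| tendsto_finsetSum _ fun i _ =>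
      ((hw _ (hmem i).2).sub (hw _ (hmem i).1)).abs
  rw [← hlim.limsup_eq]
  exact limsup_le_limsup (Eventually.of_forall fun k => ofReal_sum_le_modVar (w k) hst)

noncomputable def oscIoo (f : ℝ → ℝ) (p q : ℝ) : ℝ≥0∞ :=
  Metric.ediam (f '' (Ioo p q ∩ Icc 0 1))

theorem exists_lt_abs_sub_of_lt_oscIoo {f : ℝ → ℝ} {p q ε : ℝ}
    (h : ENNReal.ofReal ε < oscIoo f p q) :
    ∃ a ∈ Ioo p q ∩ Icc 0 1, ∃ b ∈ Ioo p q ∩ Icc 0 1, a ≤ b ∧ ε < |f b - f a| := by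
  obtain ⟨a, ha, b, hb, hab⟩ : ∃ a ∈ Ioo p q ∩ Icc 0 1, ∃ b ∈ Ioo p q ∩ Icc 0 1,
      ε < |f a - f b| := by
    by_contra! hle
    refine h.not_ge (Metric.ediam_image_le_iff.2 fun a ha b hb => ?_)
    rw [edist_dist, Real.dist_eq]
    exact ENNReal.ofReal_le_ofReal (hle a ha b hb)
  rcases le_total a b with hab' | hba
  · exact ⟨a, ha, b, hb, hab', by rwa [abs_sub_comm]⟩
  · exact ⟨b, hb, a, ha, hba, hab⟩

theorem ofReal_mul_le_modVar_of_lt_oscIoo (f : ℝ → ℝ) {n : ℕ} {P Q : Fin n → ℝ}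
    (hPQ : Pairwise (Disjoint on fun i => Ioo (P i) (Q i))) {ε : ℝ}
    (hε : ∀ i, ENNReal.ofReal ε < oscIoo f (P i) (Q i)) :
    ENNReal.ofReal (n * ε) ≤ modVar f n := by
  choose s hs t ht hst hlt using fun i => exists_lt_abs_sub_of_lt_oscIoo (hε i)
  have hsub : ∀ i, Ioo (s i) (t i) ⊆ Ioo (P i) (Q i) := fun i =>
    Ioo_subset_Ioo (hs i).1.1.le (ht i).1.2.le
  have hno : NonoverlappingFin s t :=
    ⟨fun i => ⟨(hs i).2.1, hst i, (ht i).2.2⟩, fun i j hij => (hPQ hij).mono (hsub i) (hsub j)⟩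
  calc ENNReal.ofReal (n * ε) = ENNReal.ofReal (∑ _i : Fin n, ε) := by simp
    _ ≤ ENNReal.ofReal (∑ i, |f (t i) - f (s i)|) :=
      ENNReal.ofReal_le_ofReal (Finset.sum_le_sum fun i _ => (hlt i).le)
    _ ≤ modVar f n := ofReal_sum_le_modVar f hno

def heavyPoints (ω : ℚ × ℚ → ℝ≥0∞) (c : ℝ≥0∞) : Set ℝ :=
  {t ∈ Icc 0 1 | ∀ p q : ℚ, (p : ℝ) < t → t < q → c ≤ ω (p, q)}

section Selection

variable {u : ℕ → ℝ → ℝ} {ω : ℚ × ℚ → ℝ≥0∞}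

theorem finite_heavyPoints {ν : ℕ → ℝ≥0∞} (hu : ∀ n, ∀ᶠ j in atTop, modVar (u j) n ≤ ν n)
    (hν : Tendsto (fun n => ν n / n) atTop (𝓝 0))
    (hω : ∀ pq : ℚ × ℚ, Tendsto (fun j => oscIoo (u j) pq.1 pq.2) atTop (𝓝 (ω pq)))
    {c : ℝ≥0∞} (hc : c ≠ 0) : (heavyPoints ω c).Finite := by
  obtain ⟨ε, -, hε, hεc⟩ := ENNReal.lt_iff_exists_real_btwn.1 (pos_iff_ne_zero.2 hc)
  obtain ⟨N, hνN, hN⟩ := ((hν.eventually_lt_const hε).and (eventually_ge_atTop 1)).exists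
  have hνN' : ν N < ENNReal.ofReal (N * ε) := by
    rw [ENNReal.div_lt_iff (Or.inl (Nat.cast_ne_zero.2 (by omega)))
      (Or.inl (ENNReal.natCast_ne_top N))] at hνN
    rwa [ENNReal.ofReal_mul (by positivity), ENNReal.ofReal_natCast, mul_comm]
  by_contra hinf
  obtain ⟨F, hFsub, hFcard⟩ := Set.Infinite.exists_subset_card_eq hinf N
  obtain ⟨U, hU, hUdisj⟩ := F.finite_toSet.t2_separation
  let T := F.orderEmbOfFin hFcard
  choose p q hpT hTq hpqU using fun i =>
    exists_rat_lt_lt_Ioo_subset ((hU (T i)).2.mem_nhds (hU (T i)).1)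
  have hdisj : Pairwise (Disjoint on fun i => Ioo (p i : ℝ) (q i)) := fun i j hij =>
    (hUdisj (F.orderEmbOfFin_mem hFcard i) (F.orderEmbOfFin_mem hFcard j)
      (T.injective.ne hij)).mono (hpqU i) (hpqU j)
  have hosc : ∀ i, ∀ᶠ j in atTop, ENNReal.ofReal ε < oscIoo (u j) (p i) (q i) := fun i =>
    (hω (p i, q i)).eventually_const_lt <|
      hεc.trans_le ((hFsub (F.orderEmbOfFin_mem hFcard i)).2 _ _ (hpT i) (hTq i))
  obtain ⟨j, hoscj, hvj⟩ := ((eventually_all.2 hosc).and (hu N)).exists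
  exact ((ofReal_mul_le_modVar_of_lt_oscIoo (u j) hdisj hoscj).trans hvj).not_gt hνN'

theorem cauchySeq_of_notMem_heavyPoints
    (hω : ∀ pq : ℚ × ℚ, Tendsto (fun j => oscIoo (u j) pq.1 pq.2) atTop (𝓝 (ω pq)))
    (hrat : ∀ r : ℚ, (r : ℝ) ∈ Icc 0 1 → CauchySeq fun j => u j r) {t : ℝ}
    (ht : t ∈ Icc (0 : ℝ) 1) (hH : ∀ c ≠ 0, t ∉ heavyPoints ω c) :
    CauchySeq fun j => u j t := by
  refine Metric.cauchySeq_iff.2 fun ε hε => ?_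
  obtain ⟨p, q, hpt, htq, hωpq⟩ : ∃ p q : ℚ, (p : ℝ) < t ∧ t < q ∧
      ω (p, q) < ENNReal.ofReal (ε / 3) := by
    have hne : ENNReal.ofReal (ε / 3) ≠ 0 := (ENNReal.ofReal_pos.2 (by positivity)).ne'
    have : ¬ ∀ p q : ℚ, (p : ℝ) < t → t < q → ENNReal.ofReal (ε / 3) ≤ ω (p, q) :=
      fun h => hH _ hne ⟨ht, h⟩
    push Not at this
    exact this
  obtain ⟨r, hpr, hrq⟩ := exists_rat_btwn <| lt_min
    (max_lt (hpt.trans htq) (ht.1.trans_lt htq)) (max_lt (hpt.trans_le ht.2) zero_lt_one)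
  have htJ : t ∈ Ioo (p : ℝ) q ∩ Icc 0 1 := ⟨⟨hpt, htq⟩, ht⟩
  have hrJ : (r : ℝ) ∈ Ioo (p : ℝ) q ∩ Icc 0 1 :=
    ⟨⟨(le_max_left _ _).trans_lt hpr, hrq.trans_le (min_le_left _ _)⟩,
      (le_max_right _ _).trans hpr.le, hrq.le.trans (min_le_right _ _)⟩
  obtain ⟨K, hK⟩ := ((hω (p, q)).eventually_lt_const hωpq).exists_forall_of_atTop
  have hnear : ∀ j ≥ K, dist (u j t) (u j r) < ε / 3 := fun j hj =>
    edist_lt_ofReal.1 <| (Metric.edist_le_ediam_of_mem (mem_image_of_mem _ htJ)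
      (mem_image_of_mem _ hrJ)).trans_lt (hK j hj)
  obtain ⟨L, hL⟩ := Metric.cauchySeq_iff.1 (hrat r hrJ.2) (ε / 3) (by positivity)
  refine ⟨max K L, fun m hm n hn => ?_⟩
  calc dist (u m t) (u n t)
      ≤ dist (u m t) (u m r) + dist (u m r) (u n r) + dist (u n r) (u n t) := dist_triangle4 ..
    _ < ε / 3 + ε / 3 + ε / 3 := by
      rw [dist_comm (u n r)]
      gcongr
      exacts [hnear m (le_of_max_le_left hm), hL m (le_of_max_le_right hm) n
        (le_of_max_le_right hn), hnear n (le_of_max_le_left hn)]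
    _ = ε := by ring

end Selection

theorem exists_subseq_cauchySeq_of_modVar_le {x : ℕ → ℝ → ℝ}
    (hptw : ∀ t ∈ Icc (0 : ℝ) 1, ∃ C : ℝ, ∀ j, |x j t| ≤ C) {ν : ℕ → ℝ≥0∞}
    (hx : ∀ n, ∀ᶠ j in atTop, modVar (x j) n ≤ ν n)
    (hν : Tendsto (fun n => ν n / n) atTop (𝓝 0)) :
    ∃ φ : ℕ → ℕ, StrictMono φ ∧ ∀ t ∈ Icc (0 : ℝ) 1, CauchySeq fun k => x (φ k) t := by
  obtain ⟨φ₁, hφ₁, ω, hω⟩ := exists_subseq_forall_tendsto (fun _ => isCompact_univ)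
    (fun j (pq : ℚ × ℚ) => oscIoo (x j) pq.1 pq.2) fun _ _ => mem_univ _
  set H := ⋃ n : ℕ, heavyPoints ω (n : ℝ≥0∞)⁻¹
  have hH : H.Countable := countable_iUnion fun n =>
    (finite_heavyPoints (fun n => hφ₁.tendsto_atTop.eventually (hx n)) hν hω (by simp)).countable
  set D := H ∪ (range ((↑) : ℚ → ℝ) ∩ Icc 0 1)
  have hD : D ⊆ Icc 0 1 := union_subset (iUnion_subset fun _ _ ht => ht.1) inter_subset_right
  have : Countable D := (hH.union ((countable_range _).mono inter_subset_left)).to_subtype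
  choose C hC using hptw
  obtain ⟨φ₂, hφ₂, L, hL⟩ := exists_subseq_forall_tendsto
    (K := fun s : D => Icc (-C s (hD s.2)) (C s (hD s.2))) (fun _ => isCompact_Icc)
    (fun j (s : D) => x (φ₁ j) s) fun j s => abs_le.1 (hC _ _ _)
  refine ⟨φ₁ ∘ φ₂, hφ₁.comp hφ₂, fun t ht => ?_⟩
  by_cases htD : t ∈ D
  · exact (hL ⟨t, htD⟩).cauchySeq
  refine cauchySeq_of_notMem_heavyPoints (fun pq => (hω pq).comp hφ₂.tendsto_atTop)
    (fun r hr => (hL ⟨r, Or.inr ⟨⟨r, rfl⟩, hr⟩⟩).cauchySeq) ht fun c hc htc => htD (Or.inl ?_)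
  obtain ⟨n, hn⟩ := ENNReal.exists_inv_nat_lt hc
  exact mem_iUnion.2 ⟨n, htc.1, fun p q hp hq => hn.le.trans (htc.2 p q hp hq)⟩

theorem stmt11_general (x : ℕ → ℝ → ℝ)
    (hptw : ∀ t ∈ Set.Icc (0 : ℝ) 1, ∃ C : ℝ, ∀ j, |x j t| ≤ C)
    (μ : ℕ → ℝ≥0∞) (hμ : ∀ n, μ n = Filter.limsup (fun j => modVar (x j) n) atTop)
    (hfin : ∀ n, μ n < ⊤)
    (ho : Tendsto (fun n => μ n / (n : ℝ≥0∞)) atTop (nhds 0)) :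
    ∃ φ : ℕ → ℕ, StrictMono φ ∧ ∃ y : ℝ → ℝ,
      (∀ t ∈ Set.Icc (0 : ℝ) 1, Tendsto (fun k => x (φ k) t) atTop (nhds (y t))) ∧
      ∀ n, modVar y n ≤ μ n := by
  have hx : ∀ n, ∀ᶠ j in atTop, modVar (x j) n ≤ μ n + 1 := fun n =>
    have hlt : limsup (fun j => modVar (x j) n) atTop < μ n + 1 := by
      rw [← hμ n]
      exact ENNReal.lt_add_right (hfin n).ne one_ne_zero
    (eventually_lt_of_limsup_lt hlt).mono fun _ => le_of_lt
  have hν : Tendsto (fun n => (μ n + 1) / n) atTop (𝓝 0) := by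
    simpa only [ENNReal.add_div, one_div, add_zero] using
      ho.add ENNReal.tendsto_inv_nat_nhds_zero
  obtain ⟨φ, hφ, hcauchy⟩ := exists_subseq_cauchySeq_of_modVar_le hptw hx hν
  have hlim : ∀ t ∈ Icc (0 : ℝ) 1, Tendsto (fun k => x (φ k) t) atTop
      (𝓝 (limUnder atTop fun k => x (φ k) t)) := fun t ht => (hcauchy t ht).tendsto_limUnder
  refine ⟨φ, hφ, _, hlim, fun n => ?_⟩
  calc modVar _ n ≤ limsup (fun k => modVar (x (φ k)) n) atTop :=
        modVar_le_limsup_of_tendsto hlim n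
    _ ≤ limsup (fun j => modVar (x j) n) atTop :=
      hφ.tendsto_atTop.limsup_comp_le_limsup (u := fun j => modVar (x j) n)
    _ = μ n := (hμ n).symm

/-- Chistyakov's selection principle: if `(x_j)` is a pointwise bounded
sequence of bounded functions on `[0,1]` whose moduli of variation satisfy
`μ(n) = limsup_j v(x_j, n) < ∞` and `μ(n) = o(n)`, then some subsequence converges
pointwise on `[0,1]` to a function `x` with `v(x,n) ≤ μ(n)` for all `n`. -/
theorem stmt11 (x : ℕ → ℝ → ℝ) (hbdd : ∀ j, BoundedOn01 (x j))
    (hptw : ∀ t ∈ Set.Icc (0 : ℝ) 1, ∃ C : ℝ, ∀ j, |x j t| ≤ C)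
    (μ : ℕ → ℝ≥0∞) (hμ : ∀ n, μ n = Filter.limsup (fun j => modVar (x j) n) atTop)
    (hfin : ∀ n, μ n < ⊤)
    (ho : Tendsto (fun n => μ n / (n : ℝ≥0∞)) atTop (nhds 0)) :
    ∃ φ : ℕ → ℕ, StrictMono φ ∧ ∃ y : ℝ → ℝ,
      (∀ t ∈ Set.Icc (0 : ℝ) 1, Tendsto (fun k => x (φ k) t) atTop (nhds (y t))) ∧
      ∀ n, modVar y n ≤ μ n :=
  stmt11_general x hptw μ hμ hfin ho
end
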